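/- arXiv:cs/0504102 — 3 statements merged into one kernel-verified Lean document; each statement's English description precedes it below -/
import Mathlib

section
/- If r is the Ramsey number R(k, k+1), then every graph G on at least r vertices satisfies λ(G) ≥ k, i.e., some graph in the LC orbit of G has an independent set of size k. Consequently Λ_n ≥ k for all n ≥ r. -/
variable {V : Type*}

/-- Local complementation at vertex `v`: complement the induced subgraph on the
neighborhood of `v`, leaving all other adjacencies unchanged. -/
def localComp (G : SimpleGraph V) (v : V) : SimpleGraph V where
  Adj x y := (G.Adj v x ∧ G.Adj v y ∧ ¬ G.Adj x y ∧ x ≠ y) ∨ (¬(G.Adj v x ∧ G.Adj v y) ∧ G.Adj x y)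
  symm := by
    constructor
    intro x y h
    rcases h with ⟨h1, h2, h3, h4⟩ | ⟨h1, h2⟩
    · exact Or.inl ⟨h2, h1, fun h => h3 h.symm, h4.symm⟩
    · exact Or.inr ⟨fun h => h1 ⟨h.2, h.1⟩, h2.symm⟩
  loopless := by
    constructor
    intro x h
    rcases h with ⟨_, _, _, h4⟩ | ⟨_, h2⟩
    · exact h4 rfl
    · exact G.irrefl h2

/-- LC-equivalence: `H` is obtained from `G` by a finite sequence of local complementations. -/
def lcEquiv (G H : SimpleGraph V) : Prop :=
  Relation.ReflTransGen (fun G' H' => ∃ v, localComp G' v = H') G H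

/-- `A` is an independent set of `G`: its vertices are pairwise non-adjacent. -/
def isIndep (G : SimpleGraph V) (A : Finset V) : Prop :=
  ∀ a ∈ A, ∀ b ∈ A, ¬ G.Adj a b

/-- `lam G`: the maximum size of an independent set over all graphs in the LC orbit of `G`. -/
noncomputable def lam {n : ℕ} (G : SimpleGraph (Fin n)) : ℕ :=
  sSup { k | ∃ H, lcEquiv G H ∧ ∃ A : Finset (Fin n), isIndep H A ∧ A.card = k }

/-- `Lam n`: the minimum of `lam` over all graphs on `n` vertices. -/
noncomputable def Lam (n : ℕ) : ℕ :=
  sInf { m | ∃ G : SimpleGraph (Fin n), lam G = m }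

/-! By the Ramsey hypothesis, the first `r` vertices of `G` carry either an independent set of
size `k`, and we are done, or a clique of size `k + 1`. Local complementation at a vertex `v` of
that clique complements the neighbourhood of `v`, which contains the rest of the clique, so the
remaining `k` vertices become pairwise non-adjacent. -/

section

variable {W : Type*} {G : SimpleGraph V}

theorem isIndep.of_comap {f : W ↪ V} {A : Finset W} (hA : isIndep (G.comap f) A) :
    isIndep G (A.map f) := by
  simp only [isIndep, Finset.forall_mem_map]
  exact hA

theorem SimpleGraph.IsClique.of_comap {f : W ↪ V} {B : Finset W} (hB : (G.comap f).IsClique ↑B) :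
    G.IsClique ↑(B.map f) := by
  rw [Finset.coe_map]
  exact (hB.map (f := f)).mono (SimpleGraph.map_comap_le f G)

variable [DecidableEq V]

theorem isIndep_localComp_erase {B : Finset V} (hB : G.IsClique ↑B) {v : V} (hv : v ∈ B) :
    isIndep (localComp G v) (B.erase v) := by
  intro a ha b hb
  have hva : G.Adj v a := hB hv (Finset.mem_of_mem_erase ha) (Finset.ne_of_mem_erase ha).symm
  have hvb : G.Adj v b := hB hv (Finset.mem_of_mem_erase hb) (Finset.ne_of_mem_erase hb).symm
  rintro (⟨-, -, hab, hne⟩ | ⟨hnot, -⟩)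
  · exact hab (hB (Finset.mem_of_mem_erase ha) (Finset.mem_of_mem_erase hb) hne)
  · exact hnot ⟨hva, hvb⟩

theorem exists_lcEquiv_isIndep_of_isClique {k : ℕ} {B : Finset V} (hB : G.IsClique ↑B)
    (hk : k + 1 ≤ B.card) : ∃ H, lcEquiv G H ∧ ∃ A : Finset V, isIndep H A ∧ k ≤ A.card := by
  obtain ⟨v, hv⟩ := Finset.card_pos.mp (by omega : 0 < B.card)
  refine ⟨localComp G v, .single ⟨v, rfl⟩, B.erase v, isIndep_localComp_erase hB hv, ?_⟩
  rw [Finset.card_erase_of_mem hv]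
  omega

end

theorem card_le_lam {n : ℕ} {G H : SimpleGraph (Fin n)} (hGH : lcEquiv G H) {A : Finset (Fin n)}
    (hA : isIndep H A) : A.card ≤ lam G :=
  le_csSup ⟨n, by rintro _ ⟨-, -, A, -, rfl⟩; simpa using A.card_le_univ⟩ ⟨H, hGH, A, hA, rfl⟩

theorem le_Lam {k n : ℕ} (h : ∀ G : SimpleGraph (Fin n), k ≤ lam G) : k ≤ Lam n :=
  le_csInf ⟨_, ⊥, rfl⟩ (by rintro _ ⟨G, rfl⟩; exact h G)

/-- If `r` is the Ramsey number `R(k, k+1)` (every graph on `r` vertices has an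
independent set of size `k` or a clique of size `k+1`), then every graph `G` on
`n ≥ r` vertices has a graph in its LC orbit with an independent set of size `k`;
hence `λ(G) ≥ k` and `Λ_n ≥ k`. -/
theorem lam_ge_of_ramsey (k r n : ℕ)
    (hr : ∀ H : SimpleGraph (Fin r),
      (∃ A : Finset (Fin r), isIndep H A ∧ k ≤ A.card) ∨
      (∃ B : Finset (Fin r), H.IsClique ↑B ∧ k + 1 ≤ B.card))
    (hrn : r ≤ n) (G : SimpleGraph (Fin n)) :
    (∃ H, lcEquiv G H ∧ ∃ A : Finset (Fin n), isIndep H A ∧ k ≤ A.card) ∧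
      k ≤ lam G ∧ k ≤ Lam n := by
  have horbit (G : SimpleGraph (Fin n)) :
      ∃ H, lcEquiv G H ∧ ∃ A : Finset (Fin n), isIndep H A ∧ k ≤ A.card := by
    rcases hr (G.comap (Fin.castLEEmb hrn)) with ⟨A, hA, hk⟩ | ⟨B, hB, hk⟩
    · exact ⟨G, .refl, _, hA.of_comap, by rwa [Finset.card_map]⟩
    · exact exists_lcEquiv_isIndep_of_isClique hB.of_comap (by rwa [Finset.card_map])
  have hlam (G : SimpleGraph (Fin n)) : k ≤ lam G := by
    obtain ⟨H, hGH, A, hA, hk⟩ := horbit G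
    exact hk.trans (card_le_lam hGH hA)
  exact ⟨horbit G, hlam G, le_Lam hlam⟩
end

section
/- Let f be a quadratic Boolean function on n variables with associated graph G (adjacency matrix Γ where Γ_{i,j} = 1 iff the monomial x_i x_j occurs in f). Let A be an independent set of G of size α. Let s ∈ ℝ^{2^n} have entries s_x = 2^{-n/2}(−1)^{f(x)}, and let U be the tensor product applying the 2×2 Hadamard matrix H = (1/√2)[[1,1],[1,−1]] to the coordinates in A and the identity elsewhere. Then the vector S = U s has maximum squared coefficient magnitude max_k |S_k|^2 = 2^{α − n}. -/
/-!
Because `A` is independent, `f` is affine in the variables indexed by `A`: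
`f x = ∑ a ∈ A, x a * L a x + f (x with x_A = 0)`, where `L a x` sums `x j` over the neighbours
`j ∉ A` of `a`. The identity factors of `U` force `x j = k j` off `A`, so `S k` factors into
one-variable Hadamard sums `(1 + (-1) ^ (k a + L a k)) / √2`, one for each `a ∈ A`, and each of these
is `√2` or `0`. Hence `S k ^ 2` is either `2 ^ (α - n)` or `0`, and `k = 0` attains the former.
-/

variable {V : Type*}

open scoped Classical

/-- The quadratic Boolean function associated to the graph `G`. -/
noncomputable def gfun {n : ℕ} (G : SimpleGraph (Fin n)) (x : Fin n → ZMod 2) : ZMod 2 :=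
  ∑ i, ∑ j, if i < j ∧ G.Adj i j then x i * x j else 0

/-- The real Hadamard kernel `H = (1/√2)[[1,1],[1,-1]]`, indexed by `ZMod 2`. -/
noncomputable def HkerR (a b : ZMod 2) : ℝ := (-1 : ℝ) ^ (a.val * b.val) / Real.sqrt 2

theorem Finset.sum_sum_lt_add_swap {ι R : Type*} [Fintype ι] [LinearOrder ι] [AddCommMonoid R]
    (M : ι → ι → R) (hM : ∀ i, M i i = 0) :
    ∑ i, ∑ j, (if i < j then M i j + M j i else 0) = ∑ i, ∑ j, M i j := by
  have hsplit : ∀ i j, M i j = (if i < j then M i j else 0) + (if j < i then M i j else 0) := by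
    intro i j
    rcases lt_trichotomy i j with h | rfl | h
    · simp [h, h.not_gt]
    · simp [hM]
    · simp [h, h.not_gt]
  calc _ = ∑ i, ∑ j, (if i < j then M i j else 0) + ∑ i, ∑ j, (if j < i then M i j else 0) := by
        rw [Finset.sum_comm (f := fun i j => if j < i then M i j else 0)]
        simp only [ite_add_zero, Finset.sum_add_distrib]
    _ = _ := by simp only [← Finset.sum_add_distrib, ← hsplit]

theorem AddChar.map_sum_eq_prod {ι A M : Type*} [AddCommMonoid A] [CommMonoid M]
    (ψ : AddChar A M) (s : Finset ι) (f : ι → A) : ψ (∑ i ∈ s, f i) = ∏ i ∈ s, ψ (f i) := by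
  classical
  induction s using Finset.induction_on with
  | empty => simp
  | insert i s hi ih => rw [Finset.sum_insert hi, Finset.prod_insert hi, map_add_eq_mul, ih]

noncomputable def signChar : AddChar (ZMod 2) ℝ where
  toFun u := (-1) ^ u.val
  map_zero_eq_one' := by simp
  map_add_eq_mul' a b := by rw [ZMod.val_add, ← neg_one_pow_eq_pow_mod_two, pow_add]

theorem signChar_apply (u : ZMod 2) : signChar u = (-1) ^ u.val := rfl

theorem neg_one_pow_val_mul_val (a b : ZMod 2) :
    (-1 : ℝ) ^ (a.val * b.val) = signChar (a * b) := by
  rw [signChar_apply, ZMod.val_mul, ← neg_one_pow_eq_pow_mod_two]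

theorem signChar_sq (c : ZMod 2) : signChar c ^ 2 = 1 := by
  rw [signChar_apply, ← pow_mul, pow_mul', neg_one_sq, one_pow]

theorem one_add_signChar (c : ZMod 2) : 1 + signChar c = if c = 0 then 2 else 0 := by
  obtain rfl | rfl : c = 0 ∨ c = 1 := by revert c; decide
  · norm_num
  · norm_num [signChar_apply, ZMod.val_one]

theorem sqrt_two_pow_sq (m : ℕ) : (√2 ^ m) ^ 2 = 2 ^ m := by
  rw [pow_right_comm, Real.sq_sqrt zero_le_two]

noncomputable def nbrSumOutside {R : Type*} [Fintype V] [AddCommMonoid R] (G : SimpleGraph V)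
    (A : Finset V) (x : V → R) (a : V) : R :=
  ∑ j, if G.Adj a j ∧ j ∉ A then x j else 0

section

variable {n : ℕ} {G : SimpleGraph (Fin n)} {A : Finset (Fin n)}

theorem gfun_eq_of_isIndep (hA : isIndep G A) (x : Fin n → ZMod 2) :
    gfun G x =
      ∑ a ∈ A, x a * nbrSumOutside G A x a + gfun G (fun i => if i ∈ A then 0 else x i) := by
  set M : Fin n → Fin n → ZMod 2 := fun i j =>
    if i ∈ A ∧ G.Adj i j ∧ j ∉ A then x i * x j else 0
  have hpair : ∀ i j, (if i < j ∧ G.Adj i j then x i * x j else 0) =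
      (if i < j then M i j + M j i else 0) +
        if i < j ∧ G.Adj i j then (if i ∈ A then 0 else x i) * (if j ∈ A then 0 else x j)
        else 0 := by
    intro i j
    by_cases hij : G.Adj i j
    · have := hA i
      have := hA j
      by_cases hi : i ∈ A <;> by_cases hj : j ∈ A <;> simp_all [M, hij.symm, mul_comm]
    · simp [M, hij, G.adj_comm j i]
  have hrow : ∀ i, ∑ j, M i j = if i ∈ A then x i * nbrSumOutside G A x i else 0 := by
    intro i
    by_cases hi : i ∈ A <;> simp [M, hi, nbrSumOutside, Finset.mul_sum]
  rw [gfun, Finset.sum_congr rfl fun i _ => Finset.sum_congr rfl fun j _ => hpair i j]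
  simp only [Finset.sum_add_distrib]
  rw [Finset.sum_sum_lt_add_swap M fun i => by simp [M]]
  simp only [hrow, Finset.sum_ite_mem, Finset.univ_inter]
  rfl

/-- The `i`-th tensor factor of `U`. -/
noncomputable def coordKernel (A : Finset (Fin n)) (i : Fin n) (a b : ZMod 2) : ℝ :=
  if i ∈ A then HkerR a b else if a = b then 1 else 0

theorem sum_coordKernel_mul (i : Fin n) (a c : ZMod 2) :
    ∑ b, coordKernel A i a b * (if i ∈ A then signChar (b * c) else 1) =
      if i ∈ A then (1 + signChar (a + c)) / √2 else 1 := by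
  by_cases hi : i ∈ A
  · simp only [coordKernel, hi, if_true, HkerR, neg_one_pow_val_mul_val]
    rw [show (Finset.univ : Finset (ZMod 2)) = {0, 1} from rfl, Finset.sum_pair zero_ne_one]
    simp only [mul_zero, zero_mul, mul_one, one_mul, AddChar.map_zero_eq_one,
      AddChar.map_add_eq_mul]
    ring
  · simp [coordKernel, hi]

theorem prod_coordKernel_mul_signChar_gfun (hA : isIndep G A) (k x : Fin n → ZMod 2) :
    (∏ i, coordKernel A i (k i) (x i)) * signChar (gfun G x) =
      signChar (gfun G fun i => if i ∈ A then 0 else k i) * ∏ i, coordKernel A i (k i) (x i) *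
        (if i ∈ A then signChar (x i * nbrSumOutside G A k i) else 1) := by
  by_cases hx : ∀ i ∉ A, x i = k i
  · have hnbr : nbrSumOutside G A x = nbrSumOutside G A k := funext fun a =>
      Finset.sum_congr rfl fun j _ => by by_cases hj : j ∈ A <;> simp [hj, hx j]
    have hzero : (fun i => if i ∈ A then 0 else x i) = fun i => if i ∈ A then 0 else k i :=
      funext fun i => by by_cases hi : i ∈ A <;> simp [hi, hx i]
    rw [gfun_eq_of_isIndep hA x, hnbr, hzero, AddChar.map_add_eq_mul, AddChar.map_sum_eq_prod,
      Finset.prod_mul_distrib, Finset.prod_ite_mem, Finset.univ_inter]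
    ring
  · push Not at hx
    obtain ⟨i, hi, hxi⟩ := hx
    have hzero : coordKernel A i (k i) (x i) = 0 := by simp [coordKernel, hi, Ne.symm hxi]
    rw [Finset.prod_eq_zero (Finset.mem_univ i) hzero,
      Finset.prod_eq_zero (Finset.mem_univ i) (by rw [hzero, zero_mul])]
    simp

theorem hadamard_sum_eq (hA : isIndep G A) (k : Fin n → ZMod 2) :
    ∑ x, (∏ i, coordKernel A i (k i) (x i)) * signChar (gfun G x) =
      signChar (gfun G fun i => if i ∈ A then 0 else k i) *
        if ∀ a ∈ A, k a + nbrSumOutside G A k a = 0 then √2 ^ A.card else 0 := by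
  simp_rw [prod_coordKernel_mul_signChar_gfun hA k, ← Finset.mul_sum]
  rw [← Fintype.prod_sum fun i b =>
    coordKernel A i (k i) b * if i ∈ A then signChar (b * nbrSumOutside G A k i) else 1]
  simp_rw [sum_coordKernel_mul, Finset.prod_ite_mem, Finset.univ_inter, one_add_signChar,
    ite_div, zero_div, Real.div_sqrt, Finset.prod_ite_zero, Finset.prod_const]

end

/-- Let `f` be the quadratic Boolean function of `G`, `A` an independent set of `G` of
size `α`, and `s = 2^{-n/2}(-1)^{f(x)}`.  Applying the Hadamard kernel to the coordinates
in `A` and the identity elsewhere, the resulting spectrum `S` has maximum squared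
coefficient magnitude exactly `2^{α - n}`. -/
theorem max_spectrum_indep_hadamard {n : ℕ} (G : SimpleGraph (Fin n)) (A : Finset (Fin n))
    (hA : isIndep G A)
    (s : (Fin n → ZMod 2) → ℝ)
    (hs : ∀ x, s x = (-1 : ℝ) ^ (gfun G x).val / Real.sqrt 2 ^ n)
    (S : (Fin n → ZMod 2) → ℝ)
    (hS : ∀ k, S k = ∑ x, (∏ i, if i ∈ A then HkerR (k i) (x i)
      else (if k i = x i then (1 : ℝ) else 0)) * s x) :
    IsGreatest (Set.range fun k => (S k) ^ 2) ((2 : ℝ) ^ ((A.card : ℤ) - (n : ℤ))) := by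
  have hS_sq : ∀ k, S k ^ 2 =
      if ∀ a ∈ A, k a + nbrSumOutside G A k a = 0 then 2 ^ ((A.card : ℤ) - n) else 0 := by
    intro k
    have hSk : S k =
        (∑ x, (∏ i, coordKernel A i (k i) (x i)) * signChar (gfun G x)) / √2 ^ n := by
      simp_rw [hS, hs, Finset.sum_div, mul_div_assoc]
      rfl
    rw [hSk, hadamard_sum_eq hA k, div_pow, mul_pow, signChar_sq, one_mul, sqrt_two_pow_sq]
    split_ifs
    · rw [sqrt_two_pow_sq, zpow_sub₀ two_ne_zero, zpow_natCast, zpow_natCast]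
    · simp
  refine ⟨⟨0, by simp [hS_sq, nbrSumOutside]⟩, ?_⟩
  rintro _ ⟨k, rfl⟩
  dsimp only
  rw [hS_sq k]
  split_ifs
  · rfl
  · positivity
end

section
/- For any symmetric matrix Γ over GF(2) with zero diagonal, the GF(2)-span of the rows of the matrix Γ + ωI over GF(4) is self-orthogonal with respect to the trace inner product; i.e., any two rows r_i, r_j satisfy r_i ∗ r_j = 0. -/
open scoped Classical

/-- Row `i` of the generator matrix `Γ + ωI` of the self-dual additive code over GF(4)
associated to the graph `G`: entry `ω` at position `i`, entry `1` at positions adjacent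
to `i`, and `0` elsewhere. -/
noncomputable def codeRow {n : ℕ} (G : SimpleGraph (Fin n)) (ω : GaloisField 2 2)
    (i : Fin n) : Fin n → GaloisField 2 2 :=
  fun j => if j = i then ω else if G.Adj i j then 1 else 0

/-- The weight of a vector over GF(4): the number of nonzero coordinates. -/
noncomputable def wt {n : ℕ} (u : Fin n → GaloisField 2 2) : ℕ :=
  (Finset.univ.filter fun j => u j ≠ 0).card

/-- The trace map `tr(x) = x + x²` of GF(4) (with values in the prime subfield). -/
noncomputable def gtr (x : GaloisField 2 2) : GaloisField 2 2 := x + x ^ 2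

/-- The trace inner product `u ∗ v = ∑ᵢ tr(uᵢ · conj(vᵢ))`, where `conj(x) = x²`. -/
noncomputable def tip {n : ℕ} (u v : Fin n → GaloisField 2 2) : GaloisField 2 2 :=
  ∑ i, gtr (u i * (v i) ^ 2)

private lemma gf2_two : (2 : GaloisField 2 2) = 0 := by
  have := CharP.cast_eq_zero (GaloisField 2 2) 2
  push_cast at this; exact this

private lemma gtr_zero : gtr 0 = 0 := by simp [gtr]

private lemma gtr_one : gtr 1 = 0 := by
  unfold gtr; linear_combination gf2_two

private lemma gtr_add (x y : GaloisField 2 2) : gtr (x + y) = gtr x + gtr y := by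
  unfold gtr; rw [add_pow_char x y 2]; ring

private lemma tip_add_left {n : ℕ} (u w v : Fin n → GaloisField 2 2) :
    tip (u + w) v = tip u v + tip w v := by
  unfold tip; rw [← Finset.sum_add_distrib]
  refine Finset.sum_congr rfl fun i _ => ?_
  rw [Pi.add_apply, add_mul, gtr_add]

private lemma tip_add_right {n : ℕ} (u v w : Fin n → GaloisField 2 2) :
    tip u (v + w) = tip u v + tip u w := by
  unfold tip; rw [← Finset.sum_add_distrib]
  refine Finset.sum_congr rfl fun i _ => ?_
  rw [Pi.add_apply, add_pow_char (v i) (w i) 2, mul_add, gtr_add]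

private lemma tip_zero_left {n : ℕ} (v : Fin n → GaloisField 2 2) : tip 0 v = 0 := by
  simp [tip, gtr]

private lemma tip_zero_right {n : ℕ} (u : Fin n → GaloisField 2 2) : tip u 0 = 0 := by
  simp [tip, gtr]

private lemma zmod2_cases (c : ZMod 2) : c = 0 ∨ c = 1 := by revert c; decide

/-- For any symmetric GF(2) matrix `Γ` with zero diagonal (i.e., the adjacency matrix of
a simple graph `G`), the `𝔽₂`-span of the rows of `Γ + ωI` is self-orthogonal with
respect to the trace inner product; in particular any two rows are orthogonal. -/
theorem span_rows_self_orthogonal {n : ℕ} (G : SimpleGraph (Fin n))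
    (ω : GaloisField 2 2) (hω : ω ^ 2 = ω + 1) :
    (∀ i j, tip (codeRow G ω i) (codeRow G ω j) = 0) ∧
    (∀ u ∈ Submodule.span (ZMod 2) (Set.range (codeRow G ω)),
      ∀ v ∈ Submodule.span (ZMod 2) (Set.range (codeRow G ω)), tip u v = 0) := by
  have h2 := gf2_two
  have h3 : ω ^ 3 = 1 := by linear_combination (ω + 1) * hω + ω * h2
  have hrows : ∀ i j, tip (codeRow G ω i) (codeRow G ω j) = 0 := by
    intro i j
    unfold tip codeRow
    by_cases hij : i = j
    · subst hij
      refine Finset.sum_eq_zero fun k _ => ?_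
      by_cases hk : k = i
      · simp only [hk, eq_self_iff_true, if_true]
        rw [show ω * ω ^ 2 = ω ^ 3 by ring, h3]
        simpa using gtr_one
      · by_cases ha : G.Adj i k
        · simp [hk, ha, gtr_one]
        · simp [hk, ha, gtr_zero]
    · have hsub : (∑ k, gtr ((if k = i then ω else if G.Adj i k then 1 else 0) *
          (if k = j then ω else if G.Adj j k then 1 else 0) ^ 2)) =
          ∑ k ∈ ({i, j} : Finset (Fin n)), gtr ((if k = i then ω else if G.Adj i k then 1 else 0) *
          (if k = j then ω else if G.Adj j k then 1 else 0) ^ 2) := by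
        refine (Finset.sum_subset (Finset.subset_univ _) fun k _ hk => ?_).symm
        simp only [Finset.mem_insert, Finset.mem_singleton, not_or] at hk
        obtain ⟨hki, hkj⟩ := hk
        by_cases ha : G.Adj i k <;> by_cases hb : G.Adj j k <;>
          simp [hki, hkj, ha, hb, gtr_zero, gtr_one]
      rw [hsub, Finset.sum_pair hij]
      by_cases ha : G.Adj i j
      · have ha' : G.Adj j i := ha.symm
        simp only [eq_self_iff_true, if_true, if_neg hij, if_neg (Ne.symm hij), if_pos ha, if_pos ha']
        unfold gtr
        linear_combination (ω ^ 2 + ω + 4) * hω + (3 * ω + 2) * h2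
      · have ha' : ¬ G.Adj j i := fun h => ha h.symm
        simp [hij, Ne.symm hij, ha, ha', gtr_zero]
  refine ⟨hrows, ?_⟩
  have key : ∀ i, ∀ v ∈ Submodule.span (ZMod 2) (Set.range (codeRow G ω)),
      tip (codeRow G ω i) v = 0 := by
    intro i v hv
    induction hv using Submodule.span_induction with
    | mem x hx => obtain ⟨j, rfl⟩ := hx; exact hrows i j
    | zero => exact tip_zero_right _
    | add x y _ _ hx hy => rw [tip_add_right, hx, hy, add_zero]
    | smul c x _ hx =>
      rcases zmod2_cases c with rfl | rfl
      · rw [zero_smul]; exact tip_zero_right _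
      · rwa [one_smul]
  intro u hu v hv
  induction hu using Submodule.span_induction with
  | mem x hx => obtain ⟨i, rfl⟩ := hx; exact key i v hv
  | zero => exact tip_zero_left _
  | add x y _ _ hx hy => rw [tip_add_left, hx, hy, add_zero]
  | smul c x _ hx =>
    rcases zmod2_cases c with rfl | rfl
    · rw [zero_smul]; exact tip_zero_left _
    · rwa [one_smul]
end
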